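/- Let (V,E,∂) be a finite simple graph (the map e ↦ {∂₋e,∂₊e} is injective, no loops) which is r-regular with r ≥ 2, let SG be its subdivision graph and LG its line graph, and let λ ∈ ℂ with λ ≠ 1. Then λ lies in the spectrum of the normalised Laplacian Δ_{SG} (an endomorphism of the finite-dimensional space of functions V ⊕ E → ℂ) if and only if (r/(r−1))·(1 − (1−λ)²) lies in the spectrum of the normalised Laplacian Δ_{LG} (an endomorphism of E → ℂ). -/

import Mathlib

/-- A finite graph: finite vertex set `V`, finite edge set `E`,
incidence map `bd e = (∂₋e, ∂₊e)`, no loops. -/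
structure FiniteGraph (V E : Type*) [Fintype V] [Fintype E] where
  bd : E → V × V
  no_loops : ∀ e, (bd e).1 ≠ (bd e).2

variable {V E : Type*} [Fintype V] [Fintype E] [DecidableEq V] [DecidableEq E]

/-- The set of edges adjacent to a vertex. -/
def FiniteGraph.Ev (G : FiniteGraph V E) (v : V) : Finset E :=
  Finset.univ.filter fun e => (G.bd e).1 = v ∨ (G.bd e).2 = v

/-- The degree of a vertex. -/
def FiniteGraph.deg (G : FiniteGraph V E) (v : V) : ℕ := (G.Ev v).card

/-- The normalised Laplacian of the subdivision graph `SG` of `G`, acting on functions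
`V ⊕ E → ℂ` by `(Δ_{SG} g)(v) = g(v) − (1/deg v)·Σ_{e∈E_v} g(e)` and
`(Δ_{SG} g)(e) = g(e) − (g(∂₋e) + g(∂₊e))/2`. -/
noncomputable def FiniteGraph.DeltaSG (G : FiniteGraph V E) :
    Module.End ℂ ((V ⊕ E) → ℂ) where
  toFun g := Sum.elim
    (fun v => g (Sum.inl v) - (1 / (G.deg v : ℂ)) * ∑ e ∈ G.Ev v, g (Sum.inr e))
    (fun e => g (Sum.inr e) - (g (Sum.inl (G.bd e).1) + g (Sum.inl (G.bd e).2)) / 2)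
  map_add' g h := by
    funext x
    cases x with
    | inl v => simp [Finset.sum_add_distrib, mul_add]; ring
    | inr e => simp; ring
  map_smul' c g := by
    funext x
    cases x with
    | inl v => simp [mul_sub, Finset.mul_sum, mul_comm, mul_left_comm, mul_assoc]
    | inr e => simp; ring

/-- The normalised Laplacian of the line graph `LG` of an `r`-regular simple graph `G`,
acting on functions `E → ℂ` by
`(Δ_{LG} φ)(e) = φ(e) − (1/(2r−2))·Σ_{e'≠e sharing an endpoint with e} φ(e')`. -/
noncomputable def FiniteGraph.DeltaLG (G : FiniteGraph V E) (r : ℕ) :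
    Module.End ℂ (E → ℂ) where
  toFun φ := fun e => φ e -
    (1 / (2 * (r : ℂ) - 2)) * ∑ e' ∈ ((G.Ev (G.bd e).1 ∪ G.Ev (G.bd e).2).erase e), φ e'
  map_add' φ ψ := by
    funext e
    simp [Finset.sum_add_distrib, mul_add]
    ring
  map_smul' c φ := by
    funext e
    simp [mul_sub, Finset.mul_sum, mul_comm, mul_left_comm, mul_assoc]

/-!
Put `μ = 1 - λ`, `(B φ) v = Σ_{e ∈ E_v} φ e` and `(Bᵗ g) e = g (∂₋e) + g (∂₊e)`. On an
`r`-regular graph, `Δ_{SG} g = λ g` says `(1/r) B (g|_E) = μ g|_V` and `(1/2) Bᵗ (g|_V) = μ g|_E`,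
so `μ` is an eigenvalue of the off-diagonal block operator with blocks `(1/r) B` and `(1/2) Bᵗ`;
as `μ ≠ 0`, this holds iff `μ²` is an eigenvalue of `(1/2r) Bᵗ B`. On a simple graph
`Bᵗ B φ e = 2 φ e + Σ_{e' ∼ e} φ e'`, which turns the latter into the eigenvalue equation of
`Δ_{LG}` for `(r/(r-1)) (1 - μ²)`.
-/

theorem Module.End.mem_spectrum_iff_exists_apply_eq_smul {K M : Type*} [Field K]
    [AddCommGroup M] [Module K M] [FiniteDimensional K M] (f : Module.End K M) (μ : K) :
    μ ∈ spectrum K f ↔ ∃ x ≠ 0, f x = μ • x := by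
  rw [← Module.End.hasEigenvalue_iff_mem_spectrum, Module.End.hasEigenvalue_iff,
    Submodule.ne_bot_iff]
  simp only [Module.End.mem_eigenspace_iff, and_comm]

theorem LinearMap.exists_off_diagonal_eigenvector_iff {K M N : Type*} [Field K]
    [AddCommGroup M] [Module K M] [AddCommGroup N] [Module K N]
    (A : N →ₗ[K] M) (B : M →ₗ[K] N) {μ : K} (hμ : μ ≠ 0) :
    (∃ p : M × N, p ≠ 0 ∧ A p.2 = μ • p.1 ∧ B p.1 = μ • p.2) ↔
      ∃ y ≠ 0, B (A y) = μ ^ 2 • y := by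
  constructor
  · rintro ⟨⟨x, y⟩, hxy, hA, hB⟩
    refine ⟨y, fun hy => hxy ?_, by rw [hA, map_smul, hB, smul_smul, sq]⟩
    have hx : x = 0 := by simpa [hy, hμ] using hA.symm
    rw [hx, hy, Prod.mk_zero_zero]
  · rintro ⟨y, hy, hBA⟩
    refine ⟨(μ⁻¹ • A y, y), fun h => hy (congrArg Prod.snd h), ?_, ?_⟩
    · rw [smul_smul, mul_inv_cancel₀ hμ, one_smul]
    · rw [map_smul, hBA, smul_smul, sq, ← mul_assoc, inv_mul_cancel₀ hμ, one_mul]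

namespace FiniteGraph

noncomputable def starSum (G : FiniteGraph V E) : (E → ℂ) →ₗ[ℂ] (V → ℂ) where
  toFun φ v := ∑ e ∈ G.Ev v, φ e
  map_add' φ ψ := by
    funext v
    simp [Finset.sum_add_distrib]
  map_smul' c φ := by
    funext v
    simp [Finset.mul_sum]

def endpointSum (G : FiniteGraph V E) : (V → ℂ) →ₗ[ℂ] (E → ℂ) where
  toFun g e := g (G.bd e).1 + g (G.bd e).2
  map_add' g h := by
    funext e
    simp only [Pi.add_apply]
    ring
  map_smul' c g := by
    funext e
    simp only [Pi.smul_apply, smul_eq_mul, RingHom.id_apply]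
    ring

omit [DecidableEq E] in
theorem starSum_apply (G : FiniteGraph V E) (φ : E → ℂ) (v : V) :
    G.starSum φ v = ∑ e ∈ G.Ev v, φ e := rfl

omit [DecidableEq V] [DecidableEq E] in
theorem endpointSum_apply (G : FiniteGraph V E) (g : V → ℂ) (e : E) :
    G.endpointSum g e = g (G.bd e).1 + g (G.bd e).2 := rfl

omit [DecidableEq E] in
theorem mem_Ev (G : FiniteGraph V E) {v : V} {e : E} :
    e ∈ G.Ev v ↔ (G.bd e).1 = v ∨ (G.bd e).2 = v := by
  simp [Ev]

theorem Ev_fst_inter_Ev_snd (G : FiniteGraph V E)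
    (hsimple : Function.Injective fun e => ({(G.bd e).1, (G.bd e).2} : Set V)) (e : E) :
    G.Ev (G.bd e).1 ∩ G.Ev (G.bd e).2 = {e} := by
  ext e'
  simp only [Finset.mem_inter, Finset.mem_singleton, mem_Ev]
  constructor
  · rintro ⟨h1 | h1, h2 | h2⟩
    · exact absurd (h1.symm.trans h2) (G.no_loops e)
    · exact hsimple (by simp only [h1, h2])
    · exact hsimple (by simp only [h1, h2, Set.pair_comm])
    · exact absurd (h1.symm.trans h2) (G.no_loops e)
  · rintro rfl
    exact ⟨Or.inl rfl, Or.inr rfl⟩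

theorem sum_erase_Ev_union_Ev (G : FiniteGraph V E)
    (hsimple : Function.Injective fun e => ({(G.bd e).1, (G.bd e).2} : Set V))
    (φ : E → ℂ) (e : E) :
    ∑ e' ∈ (G.Ev (G.bd e).1 ∪ G.Ev (G.bd e).2).erase e, φ e' =
      G.endpointSum (G.starSum φ) e - 2 * φ e := by
  have he : e ∈ G.Ev (G.bd e).1 ∪ G.Ev (G.bd e).2 :=
    Finset.mem_union_left _ (G.mem_Ev.mpr (Or.inl rfl))
  have h := Finset.sum_union_inter (s₁ := G.Ev (G.bd e).1) (s₂ := G.Ev (G.bd e).2) (f := φ)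
  rw [G.Ev_fst_inter_Ev_snd hsimple e, Finset.sum_singleton] at h
  rw [Finset.sum_erase_eq_sub he, endpointSum_apply, starSum_apply, starSum_apply]
  linear_combination h

omit [DecidableEq E] in
theorem DeltaSG_eq_smul_iff (G : FiniteGraph V E) {r : ℕ}
    (hreg : ∀ v, G.deg v = r) (g : V ⊕ E → ℂ) (lam : ℂ) :
    G.DeltaSG g = lam • g ↔
      (r : ℂ)⁻¹ • G.starSum (g ∘ Sum.inr) = (1 - lam) • (g ∘ Sum.inl) ∧
        (2 : ℂ)⁻¹ • G.endpointSum (g ∘ Sum.inl) = (1 - lam) • (g ∘ Sum.inr) := by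
  simp only [funext_iff, Sum.forall]
  refine and_congr (forall_congr' fun v => ?_) (forall_congr' fun e => ?_)
  · change g (.inl v) - 1 / (G.deg v : ℂ) * _ = _ ↔ _
    simp only [hreg v, Pi.smul_apply, smul_eq_mul, starSum_apply, Function.comp_apply]
    constructor <;> intro h <;> linear_combination -h
  · change g (.inr e) - _ / 2 = _ ↔ _
    simp only [Pi.smul_apply, smul_eq_mul, endpointSum_apply, Function.comp_apply]
    constructor <;> intro h <;> linear_combination -h

theorem DeltaLG_eq_smul_iff (G : FiniteGraph V E)
    (hsimple : Function.Injective fun e => ({(G.bd e).1, (G.bd e).2} : Set V))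
    {r : ℕ} (hr : 2 ≤ r) (φ : E → ℂ) (μ : ℂ) :
    G.DeltaLG r φ = ((r : ℂ) / ((r : ℂ) - 1) * (1 - μ ^ 2)) • φ ↔
      (2 : ℂ)⁻¹ • G.endpointSum ((r : ℂ)⁻¹ • G.starSum φ) = μ ^ 2 • φ := by
  have hr0 : (r : ℂ) ≠ 0 := by exact_mod_cast (by omega : r ≠ 0)
  have hr1 : (r : ℂ) - 1 ≠ 0 := sub_ne_zero.mpr (by exact_mod_cast (by omega : r ≠ 1))
  simp only [funext_iff]
  refine forall_congr' fun e => ?_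
  change φ e - _ * ∑ e' ∈ _, φ e' = _ ↔ _
  simp only [G.sum_erase_Ev_union_Ev hsimple, map_smul, Pi.smul_apply, smul_eq_mul]
  field_simp
  constructor <;> intro h <;> linear_combination -h

end FiniteGraph

/-- For a finite `r`-regular simple graph (`r ≥ 2`) and `λ ≠ 1`:
`λ ∈ σ(Δ_{SG})` iff `(r/(r−1))·(1 − (1−λ)²) ∈ σ(Δ_{LG})`. -/
theorem stmt7 (G : FiniteGraph V E)
    (hsimple : Function.Injective fun e => ({(G.bd e).1, (G.bd e).2} : Set V))
    (r : ℕ) (hr : 2 ≤ r) (hreg : ∀ v, G.deg v = r)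
    (lam : ℂ) (hlam : lam ≠ 1) :
    lam ∈ spectrum ℂ G.DeltaSG ↔
      ((r : ℂ) / ((r : ℂ) - 1)) * (1 - (1 - lam) ^ 2) ∈ spectrum ℂ (G.DeltaLG r) := by
  simp only [Module.End.mem_spectrum_iff_exists_apply_eq_smul,
    G.DeltaSG_eq_smul_iff hreg, G.DeltaLG_eq_smul_iff hsimple hr]
  refine Iff.trans ?_ (LinearMap.exists_off_diagonal_eigenvector_iff ((r : ℂ)⁻¹ • G.starSum)
    ((2 : ℂ)⁻¹ • G.endpointSum) (sub_ne_zero.mpr hlam.symm))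
  let e := LinearEquiv.sumArrowLequivProdArrow V E ℂ ℂ
  exact e.toEquiv.exists_congr fun g => and_congr e.map_ne_zero_iff.symm Iff.rfl
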